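/- arXiv:0910.2335 — 2 statements merged into one kernel-verified Lean document; each statement's English description precedes it below -/
import Mathlib

section
/- Let A be a C*-algebra, E and F Hilbert A-modules, and Ψ : E → F a ℂ-linear local map. Then Ψ is an A₀-module map, where A₀ is the *-subalgebra of A generated by all idempotents of A: Ψ(x·v) = Ψ(x)·v for all x ∈ E and v ∈ A₀. -/
noncomputable section

/-- Data of a (right) Hilbert C*-module structure on `E` over `A`. -/
structure HilbertModuleData (A : Type*) (E : Type*)
    [NonUnitalRing A] [StarRing A] [Module ℂ A] [PartialOrder A] [Norm A]
    [NormedAddCommGroup E] [Module ℂ E] where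
  smulA : E → A → E
  smulA_add_left : ∀ x y a, smulA (x + y) a = smulA x a + smulA y a
  smulA_add_right : ∀ x a b, smulA x (a + b) = smulA x a + smulA x b
  smulA_mul : ∀ x a b, smulA x (a * b) = smulA (smulA x a) b
  smulA_smulC_left : ∀ (c : ℂ) x a, smulA (c • x) a = c • smulA x a
  smulA_smulC_right : ∀ (c : ℂ) x a, smulA x (c • a) = c • smulA x a
  inner : E → E → A
  inner_add_right : ∀ x y z, inner x (y + z) = inner x y + inner x z
  inner_smulC : ∀ (c : ℂ) x y, inner x (c • y) = c • inner x y
  inner_smulA : ∀ x y a, inner x (smulA y a) = inner x y * a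
  star_inner : ∀ x y, star (inner x y) = inner y x
  inner_self_nonneg : ∀ x, 0 ≤ inner x x
  inner_self_eq_zero : ∀ x, inner x x = 0 ↔ x = 0
  norm_eq : ∀ x, ‖x‖ = Real.sqrt ‖inner x x‖

set_option linter.unusedSectionVars false

namespace HilbertModuleData

variable {A : Type*} [NonUnitalNormedRing A] [StarRing A] [CStarRing A]
    [NormedSpace ℂ A] [PartialOrder A]
    {E : Type*} [NormedAddCommGroup E] [Module ℂ E]

theorem smulA_zero_right (h : HilbertModuleData A E) (x : E) : h.smulA x 0 = 0 := by
  have h2 := h.smulA_add_right x 0 0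
  rw [add_zero] at h2
  exact add_eq_left.mp h2.symm

theorem smulA_sub_left (h : HilbertModuleData A E) (x y : E) (a : A) :
    h.smulA (x - y) a = h.smulA x a - h.smulA y a := by
  have : h.smulA (x - y) a + h.smulA y a = h.smulA x a := by
    rw [← h.smulA_add_left, sub_add_cancel]
  exact eq_sub_of_add_eq this

theorem smulA_sub_right (h : HilbertModuleData A E) (x : E) (a b : A) :
    h.smulA x (a - b) = h.smulA x a - h.smulA x b := by
  have : h.smulA x (a - b) + h.smulA x b = h.smulA x a := by
    rw [← h.smulA_add_right, sub_add_cancel]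
  exact eq_sub_of_add_eq this

theorem inner_zero_right (h : HilbertModuleData A E) (x : E) : h.inner x 0 = 0 := by
  have h2 := h.inner_add_right x 0 0
  rw [add_zero] at h2
  exact add_eq_left.mp h2.symm

/-- If `z • a = 0` for all `a`, then `z = 0`. -/
theorem eq_zero_of_forall_smulA (h : HilbertModuleData A E) (z : E)
    (hz : ∀ a : A, h.smulA z a = 0) : z = 0 := by
  have key : h.inner z z * h.inner z z = 0 := by
    have := h.inner_smulA z z (h.inner z z)
    rw [hz, h.inner_zero_right] at this
    exact this.symm
  have hsa : star (h.inner z z) = h.inner z z := h.star_inner z z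
  have hnorm : ‖h.inner z z‖ = 0 := by
    have := CStarRing.norm_star_mul_self (x := h.inner z z)
    rw [hsa, key, norm_zero] at this
    nlinarith [norm_nonneg (h.inner z z)]
  exact (h.inner_self_eq_zero z).mp (norm_eq_zero.mp hnorm)

end HilbertModuleData

/-- A `ℂ`-linear local map between Hilbert C*-modules is a module map over the
`*`-subalgebra `A₀` of `A` generated by the idempotents of `A`. -/
theorem local_map_is_module_map_over_idempotent_star_algebra
    {A : Type*} [NonUnitalNormedRing A] [StarRing A] [CStarRing A]
    [NormedSpace ℂ A] [SMulCommClass ℂ A A] [IsScalarTower ℂ A A]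
    [StarModule ℂ A] [PartialOrder A] [StarOrderedRing A] [CompleteSpace A]
    {E F : Type*} [NormedAddCommGroup E] [Module ℂ E]
    [NormedAddCommGroup F] [Module ℂ F]
    (hE : HilbertModuleData A E) (hF : HilbertModuleData A F)
    (Ψ : E →ₗ[ℂ] F)
    (hlocal : ∀ (x : E) (a : A), hE.smulA x a = 0 → hF.smulA (Ψ x) a = 0)
    (x : E) (v : A)
    (hv : v ∈ NonUnitalStarAlgebra.adjoin ℂ {a : A | IsIdempotentElem a}) :
    Ψ (hE.smulA x v) = hF.smulA (Ψ x) v := by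
  -- key idempotent case
  have idem_case : ∀ (x : E) (p : A), IsIdempotentElem p →
      Ψ (hE.smulA x p) = hF.smulA (Ψ x) p := by
    intro x p hp
    -- Step A : Ψ(x)·p = Ψ(x·p)·p
    have hA : hF.smulA (Ψ x) p = hF.smulA (Ψ (hE.smulA x p)) p := by
      have h1 : hE.smulA (x - hE.smulA x p) p = 0 := by
        rw [hE.smulA_sub_left, ← hE.smulA_mul, hp.eq, sub_self]
      have h2 := hlocal _ p h1
      rw [map_sub, hF.smulA_sub_left, sub_eq_zero] at h2
      exact h2
    -- Step B : Ψ(x·p) = Ψ(x·p)·p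
    have hB : Ψ (hE.smulA x p) = hF.smulA (Ψ (hE.smulA x p)) p := by
      have hall : ∀ a : A, hF.smulA (Ψ (hE.smulA x p) - hF.smulA (Ψ (hE.smulA x p)) p) a = 0 := by
        intro a
        have h1 : hE.smulA (hE.smulA x p) (a - p * a) = 0 := by
          rw [← hE.smulA_mul, mul_sub, ← mul_assoc, hp.eq, sub_self, hE.smulA_zero_right]
        have h2 := hlocal _ _ h1
        rw [hF.smulA_sub_right, sub_eq_zero] at h2
        rw [hF.smulA_sub_left, h2, hF.smulA_mul, sub_self]
      have := hF.eq_zero_of_forall_smulA _ hall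
      rwa [sub_eq_zero] at this
    rw [hB, hA]
  -- reduce star-adjoin to adjoin since idempotents are star-closed
  have hstar : star {a : A | IsIdempotentElem a} = {a : A | IsIdempotentElem a} := by
    ext a
    simp only [Set.mem_star, Set.mem_setOf_eq]
    constructor
    · intro h
      have : a * a = a := by
        have := congrArg star (show star a * star a = star a from h)
        simpa [star_mul] using this
      exact this
    · intro h
      show star a * star a = star a
      rw [← star_mul, h.eq]
  have hv' : v ∈ NonUnitalAlgebra.adjoin ℂ {a : A | IsIdempotentElem a} := by
    have h1 : v ∈ (NonUnitalStarAlgebra.adjoin ℂ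
        {a : A | IsIdempotentElem a}).toNonUnitalSubalgebra := hv
    rw [NonUnitalStarAlgebra.adjoin_toNonUnitalSubalgebra, hstar, Set.union_self] at h1
    exact h1
  clear hv
  have good : ∀ w ∈ NonUnitalAlgebra.adjoin ℂ {a : A | IsIdempotentElem a},
      ∀ y : E, Ψ (hE.smulA y w) = hF.smulA (Ψ y) w := by
    intro w hw
    induction hw using NonUnitalAlgebra.adjoin_induction with
    | mem p hp => intro y; exact idem_case y p hp
    | add a b _ _ ha hb =>
        intro y
        rw [hE.smulA_add_right, map_add, ha y, hb y, hF.smulA_add_right]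
    | zero =>
        intro y
        rw [hE.smulA_zero_right, map_zero, hF.smulA_zero_right]
    | mul a b _ _ ha hb =>
        intro y
        rw [hE.smulA_mul, hF.smulA_mul, hb (hE.smulA y a), ha y]
    | smul c a _ ha =>
        intro y
        rw [hE.smulA_smulC_right, map_smul, ha y, hF.smulA_smulC_right]
  exact good v hv' x
end
end

section
/- Let A be a unital C*-algebra, E, F Hilbert A-modules, θ : E → F an A-module map preserving orthogonality, x₀ ∈ E with ⟨x₀, x₀⟩ = 1, and set u := ⟨θ(x₀), θ(x₀)⟩. Assume u is central in A. Then for every z ∈ E with ⟨x₀, z⟩ = 0, one has ⟨θ(z), θ(z)⟩ = u·⟨z, z⟩. -/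
noncomputable section

/-!
Write `⟨z, z⟩ = t* t` (possible since `⟨z, z⟩ ≥ 0` in a C*-algebra) and put `s := x₀ t`. Then
`⟨s, s⟩ = t* t = ⟨z, z⟩` and `s ⟂ z`, so `z + s ⟂ z - s`. Applying `θ`, still `θ z ⟂ θ s = (θ x₀) t`,
hence `0 = ⟨θ z + θ s, θ z - θ s⟩ = ⟨θ z, θ z⟩ - t* u t`, and `t* u t = u t* t` as `u` is central.
-/

namespace HilbertModuleData

section NonUnital

variable {A E : Type*} [NonUnitalRing A] [StarRing A] [Module ℂ A] [PartialOrder A] [Norm A]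
  [NormedAddCommGroup E] [Module ℂ E] (M : HilbertModuleData A E)

theorem inner_add_left (x y w : E) : M.inner (x + y) w = M.inner x w + M.inner y w := by
  rw [← M.star_inner, M.inner_add_right, star_add, M.star_inner, M.star_inner]

theorem inner_sub_right (x y w : E) : M.inner x (y - w) = M.inner x y - M.inner x w :=
  (AddMonoidHom.mk' (M.inner x) (M.inner_add_right x)).map_sub y w

theorem inner_eq_zero_symm {x y : E} (h : M.inner x y = 0) : M.inner y x = 0 := by
  rw [← M.star_inner, h, star_zero]

theorem inner_smulA_left (x y : E) (a : A) : M.inner (M.smulA x a) y = star a * M.inner x y := by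
  rw [← M.star_inner, M.inner_smulA, star_mul, M.star_inner]

theorem inner_smulA_smulA (x : E) (a : A) :
    M.inner (M.smulA x a) (M.smulA x a) = star a * M.inner x x * a := by
  rw [M.inner_smulA, M.inner_smulA_left]

theorem inner_add_sub_of_inner_eq_zero {x y : E} (h : M.inner x y = 0) :
    M.inner (x + y) (x - y) = M.inner x x - M.inner y y := by
  rw [M.inner_add_left, M.inner_sub_right, M.inner_sub_right, h, M.inner_eq_zero_symm h]
  abel

end NonUnital

variable {A E : Type*} [Ring A] [StarRing A] [Module ℂ A] [PartialOrder A] [Norm A]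
  [NormedAddCommGroup E] [Module ℂ E] (M : HilbertModuleData A E)

theorem inner_add_smulA_sub_smulA_eq_zero {x₀ z : E} {t : A} (hx₀ : M.inner x₀ x₀ = 1)
    (hz : M.inner z x₀ = 0) (ht : star t * t = M.inner z z) :
    M.inner (z + M.smulA x₀ t) (z - M.smulA x₀ t) = 0 := by
  rw [M.inner_add_sub_of_inner_eq_zero (by rw [M.inner_smulA, hz, zero_mul]),
    M.inner_smulA_smulA, hx₀, mul_one, ht, sub_self]

end HilbertModuleData

/-- If `θ` is an orthogonality-preserving module map, `⟨x₀,x₀⟩ = 1` and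
`u := ⟨θ x₀, θ x₀⟩` is central, then `⟨θ z, θ z⟩ = u⟨z,z⟩` whenever `z ⟂ x₀`. -/
theorem inner_theta_eq_on_orthogonal_complement
    {A : Type*} [NormedRing A] [StarRing A] [CStarRing A] [NormedAlgebra ℂ A]
    [StarModule ℂ A] [PartialOrder A] [StarOrderedRing A] [CompleteSpace A]
    {E F : Type*} [NormedAddCommGroup E] [Module ℂ E]
    [NormedAddCommGroup F] [Module ℂ F]
    (hE : HilbertModuleData A E) (hF : HilbertModuleData A F)
    (θ : E →ₗ[ℂ] F)
    (hmod : ∀ (x : E) (a : A), θ (hE.smulA x a) = hF.smulA (θ x) a)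
    (horth : ∀ x y : E, hE.inner x y = 0 → hF.inner (θ x) (θ y) = 0)
    (x₀ : E) (hx₀ : hE.inner x₀ x₀ = 1)
    (hcentral : ∀ a : A, hF.inner (θ x₀) (θ x₀) * a = a * hF.inner (θ x₀) (θ x₀))
    (z : E) (hz : hE.inner x₀ z = 0) :
    hF.inner (θ z) (θ z) = hF.inner (θ x₀) (θ x₀) * hE.inner z z := by
  let _ : CStarAlgebra A := { }
  obtain ⟨t, ht⟩ := CStarAlgebra.nonneg_iff_eq_star_mul_self.mp (hE.inner_self_nonneg z)
  have hzx : hE.inner z x₀ = 0 := hE.inner_eq_zero_symm hz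
  have horth_image := horth _ _ (hE.inner_add_smulA_sub_smulA_eq_zero hx₀ hzx ht.symm)
  rw [map_add, map_sub, hmod,
    hF.inner_add_sub_of_inner_eq_zero (by rw [hF.inner_smulA, horth z x₀ hzx, zero_mul]),
    hF.inner_smulA_smulA, sub_eq_zero] at horth_image
  rw [horth_image, mul_assoc, hcentral t, ← mul_assoc, ← ht]
  exact (hcentral _).symm
end
end
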